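/- Write M(z) = Z(z)·diag(X(z)^{-1}, I_r) in 2 + r block form M = [[M^{(11)}, M^{(12)}],[M^{(21)}, M^{(22)}]], with M^{(11)} the upper-left 2×2 block and M^{(21)} the lower-left r×2 block. Then the boundary values of M^{(11)} and of M^{(21)} from above and below ℝ agree, so M^{(11)} and M^{(21)} extend to entire matrix-valued functions on ℂ. -/

import Mathlib

open MeasureTheory Filter Matrix Asymptotics Polynomial

noncomputable section

/-- Inverse of the asymptotic diagonal matrix `diag(z^n, z^{-n+r}, z^{-1}, ..., z^{-1})`. -/
def DinvM (n r : ℕ) (z : ℂ) : Matrix (Fin 2 ⊕ Fin r) (Fin 2 ⊕ Fin r) ℂ :=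
  Matrix.diagonal (Sum.elim ![z ^ (-(n : ℤ)), z ^ ((n : ℤ) - (r : ℤ))] fun _ => z)

/-- The jump matrix `J_Z`: the identity except that its first row is
`(1, e^{-V(x)}, e^{-V(x)+a_1 x}, ..., e^{-V(x)+a_r x})`. -/
def JZmat (r : ℕ) (V : ℝ → ℝ) (a : Fin r → ℝ) (x : ℝ) :
    Matrix (Fin 2 ⊕ Fin r) (Fin 2 ⊕ Fin r) ℂ :=
  1 + Matrix.of fun i j =>
    if i = Sum.inl 0 then
      Sum.elim ![0, Complex.exp ((-(V x) : ℝ) : ℂ)]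
        (fun k => Complex.exp ((a k * x - V x : ℝ) : ℂ)) j
    else 0

/-- The column vector `x(z) = (π_n(z), −2πi κ_{n-1}² π_{n-1}(z))^t`. -/
def xcol (n : ℕ) (p : ℕ → Polynomial ℝ) (κ : ℕ → ℝ) (z : ℂ) : Fin 2 → ℂ :=
  ![Polynomial.aeval z (p n),
    -(2 * Real.pi * Complex.I) * ((κ (n - 1) : ℝ) : ℂ) ^ 2 * Polynomial.aeval z (p (n - 1))]

/-- `M(z) = Z(z) · diag(X(z)^{-1}, I_r)`. -/
def Mfun (r : ℕ) (Z : ℂ → Matrix (Fin 2 ⊕ Fin r) (Fin 2 ⊕ Fin r) ℂ)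
    (X : ℂ → Matrix (Fin 2) (Fin 2) ℂ) (z : ℂ) :
    Matrix (Fin 2 ⊕ Fin r) (Fin 2 ⊕ Fin r) ℂ :=
  Z z * Matrix.fromBlocks (X z)⁻¹ 0 0 1

/-!
The first two columns of `M` are `Z_{·,12} X⁻¹`. The left 2×2 block of `J_Z` is exactly the jump
`[[1, e^{-V}], [0, 1]]` of `X`, and the other columns of `J_Z` only affect the last `r` columns of
`Z₊`, so on `ℝ` the jumps of `Z_{·,12}` and of `X⁻¹` cancel. Gluing the common boundary values to
`M` gives a continuous function on `ℂ` that is holomorphic off `ℝ`; its integral over any rectangle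
vanishes (cut the rectangle along `ℝ`), so it is entire by Morera's theorem.
-/

open Set Topology Complex

section HolomorphicOffRealLine

variable {E : Type*} [NormedAddCommGroup E] [NormedSpace ℂ E] {f : ℂ → E}

theorem integral_boundary_rect_eq_zero_of_im_eq_zero (hc : Continuous f)
    (hd : ∀ z : ℂ, z.im ≠ 0 → DifferentiableAt ℂ f z) {z w : ℂ} (hzw : z.im = 0 ∨ w.im = 0) :
    (∫ x : ℝ in z.re..w.re, f (x + z.im * I)) - (∫ x : ℝ in z.re..w.re, f (x + w.im * I)) +
      I • (∫ y : ℝ in z.im..w.im, f (w.re + y * I)) -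
      I • (∫ y : ℝ in z.im..w.im, f (z.re + y * I)) = 0 := by
  refine integral_boundary_rect_eq_zero_of_continuousOn_of_differentiableOn f z w
    hc.continuousOn fun p ⟨_, hp⟩ => (hd p fun h0 => ?_).differentiableWithinAt
  rw [mem_preimage, mem_Ioo, h0, min_lt_iff, lt_max_iff] at hp
  rcases hzw with h | h <;> simp only [h, lt_irrefl, or_false, false_or] at hp <;>
    linarith [hp.1, hp.2]

theorem isConservativeOn_univ_of_differentiableAt_of_im_ne_zero (hc : Continuous f)
    (hd : ∀ z : ℂ, z.im ≠ 0 → DifferentiableAt ℂ f z) : IsConservativeOn f univ := by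
  intro z w _
  rw [← add_eq_zero_iff_eq_neg, wedgeIntegral_add_wedgeIntegral_eq]
  have lower := integral_boundary_rect_eq_zero_of_im_eq_zero hc hd (z := z) (w := w.re)
    (Or.inr (ofReal_im _))
  have upper := integral_boundary_rect_eq_zero_of_im_eq_zero hc hd (z := z.re) (w := w)
    (Or.inl (ofReal_im _))
  simp only [ofReal_re, ofReal_im, ofReal_zero, zero_mul, add_zero] at lower upper
  have vertical (c : ℝ) : Continuous fun y : ℝ => f (c + y * I) := by fun_prop
  have split (c : ℝ) := intervalIntegral.integral_add_adjacent_intervals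
    ((vertical c).intervalIntegrable (μ := MeasureTheory.volume) z.im 0)
    ((vertical c).intervalIntegrable 0 w.im)
  linear_combination (norm := module) lower + upper - I • split w.re + I • split z.re

variable [CompleteSpace E]

theorem differentiable_of_continuous_of_differentiableAt_of_im_ne_zero
    (hc : Continuous f) (hd : ∀ z : ℂ, z.im ≠ 0 → DifferentiableAt ℂ f z) :
    Differentiable ℂ f := by
  rw [← differentiableOn_univ,
    ← isConservativeOn_and_continuousOn_iff_isDifferentiableOn isOpen_univ]
  exact ⟨isConservativeOn_univ_of_differentiableAt_of_im_ne_zero hc hd, hc.continuousOn⟩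

theorem exists_differentiable_eq_of_tendsto_im_pos_of_tendsto_im_neg {b : ℝ → E}
    (hd : ∀ z : ℂ, z.im ≠ 0 → DifferentiableAt ℂ f z)
    (hpos : ∀ x : ℝ, Tendsto f (𝓝[{z | 0 < z.im}] x) (𝓝 (b x)))
    (hneg : ∀ x : ℝ, Tendsto f (𝓝[{z | z.im < 0}] x) (𝓝 (b x))) :
    ∃ g : ℂ → E, Differentiable ℂ g ∧ (∀ z : ℂ, z.im ≠ 0 → g z = f z) ∧ ∀ x : ℝ, g x = b x := by
  set U := {z : ℂ | z.im ≠ 0}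
  have hU_open : IsOpen U := isOpen_ne_fun continuous_im continuous_const
  have hU_dense : Dense U := (dense_compl_singleton (0 : ℝ)).preimage isOpenMap_im
  have hb (x : ℝ) : Tendsto f (𝓝[U] x) (𝓝 (b x)) := by
    have hU : U = {z | z.im < 0} ∪ {z | 0 < z.im} := by
      ext z
      exact ne_iff_lt_or_gt
    rw [hU, nhdsWithin_union]
    exact (hneg x).sup (hpos x)
  have hlim (z : ℂ) : ∃ y, Tendsto f (𝓝[U] z) (𝓝 y) := by
    by_cases hz : z.im = 0
    · have hz_real : (z.re : ℂ) = z := Complex.ext rfl (by simp [hz])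
      exact ⟨b z.re, hz_real ▸ hb z.re⟩
    · exact ⟨f z, (hd z hz).continuousAt.mono_left nhdsWithin_le_nhds⟩
  have hext : ∀ z ∈ U, extendFrom U f z = f z :=
    extendFrom_extends fun z hz => (hd z hz).continuousAt.continuousWithinAt
  refine ⟨extendFrom U f, differentiable_of_continuous_of_differentiableAt_of_im_ne_zero
    (continuous_extendFrom hU_dense hlim) fun z hz => ?_, hext,
    fun x => extendFrom_eq (hU_dense x) (hb x)⟩
  exact (hd z hz).congr_of_eventuallyEq (eventually_of_mem (hU_open.mem_nhds hz) hext)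

end HolomorphicOffRealLine

section MatrixCalculus

variable {𝕜 E : Type*} [NontriviallyNormedField 𝕜] [NormedAddCommGroup E] [NormedSpace 𝕜 E]
  {l m n : Type*} {x : E}

theorem differentiableAt_matrix_mul_apply [Fintype m] {A : E → Matrix l m 𝕜}
    {B : E → Matrix m n 𝕜}
    (hA : ∀ i k, DifferentiableAt 𝕜 (fun y => A y i k) x)
    (hB : ∀ k j, DifferentiableAt 𝕜 (fun y => B y k j) x) (i : l) (j : n) :
    DifferentiableAt 𝕜 (fun y => (A y * B y) i j) x := by
  simp only [mul_apply]
  fun_prop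

theorem differentiableAt_matrix_det [Fintype n] [DecidableEq n] {A : E → Matrix n n 𝕜}
    (hA : ∀ i j, DifferentiableAt 𝕜 (fun y => A y i j) x) :
    DifferentiableAt 𝕜 (fun y => (A y).det) x := by
  simp only [det_apply']
  fun_prop

theorem differentiableAt_matrix_inv_apply [Fintype n] [DecidableEq n] {A : E → Matrix n n 𝕜}
    (hA : ∀ i j, DifferentiableAt 𝕜 (fun y => A y i j) x) (hdet : (A x).det ≠ 0) (i j : n) :
    DifferentiableAt 𝕜 (fun y => (A y)⁻¹ i j) x := by
  have hinv (y : E) : (A y)⁻¹ i j = ((A y).det)⁻¹ * (A y).adjugate i j := by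
    rw [Matrix.inv_def, Ring.inverse_eq_inv', Matrix.smul_apply, smul_eq_mul]
  simp only [hinv, adjugate_apply]
  refine ((differentiableAt_matrix_det hA).inv hdet).mul (differentiableAt_matrix_det fun k l => ?_)
  by_cases hk : k = j
  · subst hk
    simp only [updateRow_self]
    exact differentiableAt_const _
  · simp only [updateRow_ne hk]
    exact hA k l

end MatrixCalculus

section BlockAlgebra

variable {α : Type*} [CommRing α] {l m n m' n' : Type*} [Fintype m] [Fintype n]

theorem submatrix_inl_mul_fromBlocks (A : Matrix l (m ⊕ n) α) (B : Matrix m m' α)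
    (C : Matrix m n' α) (D : Matrix n n' α) :
    (A * fromBlocks B C 0 D).submatrix id Sum.inl = A.submatrix id Sum.inl * B := by
  ext i j
  simp [mul_apply, Fintype.sum_sum_type]

theorem submatrix_inl_mul_fromBlocks_inv_eq_of_jump [DecidableEq m] [DecidableEq n]
    {Ap Am : Matrix l (m ⊕ n) α} {Xp Xm B : Matrix m m α} {C : Matrix m n α}
    (hA : Ap = Am * (fromBlocks B C 0 1 : Matrix (m ⊕ n) (m ⊕ n) α)) (hX : Xp = Xm * B)
    (hB : IsUnit B.det) :
    (Ap * (fromBlocks Xp⁻¹ 0 0 1 : Matrix (m ⊕ n) (m ⊕ n) α)).submatrix id Sum.inl =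
      (Am * (fromBlocks Xm⁻¹ 0 0 1 : Matrix (m ⊕ n) (m ⊕ n) α)).submatrix id Sum.inl := by
  simp only [hA, hX, Matrix.mul_assoc, fromBlocks_multiply, Matrix.mul_zero, Matrix.zero_mul,
    Matrix.mul_one, add_zero, zero_add, submatrix_inl_mul_fromBlocks]
  rw [Matrix.mul_inv_rev]
  exact congrArg _ (mul_nonsing_inv_cancel_left _ _ hB)

end BlockAlgebra

theorem JZmat_eq_fromBlocks (r : ℕ) (V : ℝ → ℝ) (a : Fin r → ℝ) (x : ℝ) :
    JZmat r V a x = fromBlocks !![1, Complex.exp ((-(V x) : ℝ) : ℂ); 0, 1]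
      (of fun i k => if i = 0 then Complex.exp ((a k * x - V x : ℝ) : ℂ) else 0) 0 1 := by
  ext (i | i) (j | j)
  · fin_cases i <;> fin_cases j <;> simp [JZmat]
  all_goals simp [JZmat, one_apply]

theorem differentiableAt_Mfun_apply {r : ℕ} {Z : ℂ → Matrix (Fin 2 ⊕ Fin r) (Fin 2 ⊕ Fin r) ℂ}
    {X : ℂ → Matrix (Fin 2) (Fin 2) ℂ} {z : ℂ}
    (hZ : ∀ i j, DifferentiableAt ℂ (fun w => Z w i j) z)
    (hX : ∀ i j, DifferentiableAt ℂ (fun w => X w i j) z) (hdet : (X z).det ≠ 0) (i j) :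
    DifferentiableAt ℂ (fun w => Mfun r Z X w i j) z := by
  refine differentiableAt_matrix_mul_apply hZ (fun k l => ?_) i j
  rcases k with k | k <;> rcases l with l | l <;>
    simp only [fromBlocks_apply₁₁, fromBlocks_apply₁₂, fromBlocks_apply₂₁, fromBlocks_apply₂₂]
  · exact differentiableAt_matrix_inv_apply hX hdet k l
  all_goals exact differentiableAt_const _

theorem tendsto_Mfun {r : ℕ} {Z : ℂ → Matrix (Fin 2 ⊕ Fin r) (Fin 2 ⊕ Fin r) ℂ}
    {X : ℂ → Matrix (Fin 2) (Fin 2) ℂ} {L : Filter ℂ}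
    {Zb : Matrix (Fin 2 ⊕ Fin r) (Fin 2 ⊕ Fin r) ℂ} {Xb : Matrix (Fin 2) (Fin 2) ℂ}
    (hZ : Tendsto Z L (𝓝 Zb)) (hX : Tendsto X L (𝓝 Xb))
    (hdet : Xb.det ≠ 0) : Tendsto (Mfun r Z X) L (𝓝 (Zb * fromBlocks Xb⁻¹ 0 0 1)) := by
  have hinv : Tendsto (fun z => (X z)⁻¹) L (𝓝 Xb⁻¹) := by
    refine (continuousAt_matrix_inv Xb ?_).tendsto.comp hX
    rw [Ring.inverse_eq_inv']
    exact continuousAt_inv₀ hdet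
  have hblocks : Tendsto
      (fun z => (fromBlocks (X z)⁻¹ 0 0 1 : Matrix (Fin 2 ⊕ Fin r) (Fin 2 ⊕ Fin r) ℂ)) L
      (𝓝 (fromBlocks Xb⁻¹ 0 0 1)) :=
    ((continuous_id.matrix_fromBlocks continuous_const continuous_const
      continuous_const).tendsto _).comp hinv
  exact ((continuous_fst.matrix_mul continuous_snd).tendsto _).comp (hZ.prodMk_nhds hblocks)

theorem nhdsWithin_im_pos_neBot (x : ℝ) : (𝓝[{z : ℂ | 0 < z.im}] (x : ℂ)).NeBot :=
  mem_closure_iff_nhdsWithin_neBot.mp (by simp [closure_setOfPred_lt_im])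

theorem nhdsWithin_im_neg_neBot (x : ℝ) : (𝓝[{z : ℂ | z.im < 0}] (x : ℂ)).NeBot :=
  mem_closure_iff_nhdsWithin_neBot.mp (by simp [closure_setOfPred_im_lt])

theorem M_left_blocks_entire_general
    (r : ℕ)
    (V : ℝ → ℝ)
    (a : Fin r → ℝ)
    (X : ℂ → Matrix (Fin 2) (Fin 2) ℂ)
    (hXan : ∀ z : ℂ, z.im ≠ 0 → ∀ i j, AnalyticAt ℂ (fun w => X w i j) z)
    (hXdet : ∀ z : ℂ, z.im ≠ 0 → (X z).det = 1)
    (Xp Xm : ℝ → Matrix (Fin 2) (Fin 2) ℂ)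
    (hXp : ∀ x : ℝ, Tendsto X (nhdsWithin (x : ℂ) {z : ℂ | 0 < z.im}) (nhds (Xp x)))
    (hXm : ∀ x : ℝ, Tendsto X (nhdsWithin (x : ℂ) {z : ℂ | z.im < 0}) (nhds (Xm x)))
    (hXjump : ∀ x : ℝ, Xp x = Xm x * !![1, Complex.exp ((-(V x) : ℝ) : ℂ); 0, 1])
    (hXpdet : ∀ x : ℝ, (Xp x).det = 1) (hXmdet : ∀ x : ℝ, (Xm x).det = 1)
    (Z : ℂ → Matrix (Fin 2 ⊕ Fin r) (Fin 2 ⊕ Fin r) ℂ)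
    (hZan : ∀ z : ℂ, z.im ≠ 0 → ∀ i j, AnalyticAt ℂ (fun w => Z w i j) z)
    (Zp Zm : ℝ → Matrix (Fin 2 ⊕ Fin r) (Fin 2 ⊕ Fin r) ℂ)
    (hZp : ∀ x : ℝ, Tendsto Z (nhdsWithin (x : ℂ) {z : ℂ | 0 < z.im}) (nhds (Zp x)))
    (hZm : ∀ x : ℝ, Tendsto Z (nhdsWithin (x : ℂ) {z : ℂ | z.im < 0}) (nhds (Zm x)))
    (hjump : ∀ x : ℝ, Zp x = Zm x * JZmat r V a x)
    (Mp Mm : ℝ → Matrix (Fin 2 ⊕ Fin r) (Fin 2 ⊕ Fin r) ℂ)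
    (hMp : ∀ x : ℝ, Tendsto (Mfun r Z X) (nhdsWithin (x : ℂ) {z : ℂ | 0 < z.im}) (nhds (Mp x)))
    (hMm : ∀ x : ℝ, Tendsto (Mfun r Z X) (nhdsWithin (x : ℂ) {z : ℂ | z.im < 0}) (nhds (Mm x)))
 :
    (∀ x : ℝ, ∀ i, ∀ j : Fin 2, Mp x i (Sum.inl j) = Mm x i (Sum.inl j)) ∧
    ∃ F : ℂ → Matrix (Fin 2 ⊕ Fin r) (Fin 2) ℂ,
      (∀ i j, Differentiable ℂ fun z => F z i j) ∧
      (∀ z : ℂ, z.im ≠ 0 → ∀ i j, F z i j = Mfun r Z X z i (Sum.inl j)) ∧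
      (∀ x : ℝ, ∀ i j, F (x : ℂ) i j = Mp x i (Sum.inl j)) := by
  have hMp_eq (x : ℝ) : Mp x = Zp x * fromBlocks (Xp x)⁻¹ 0 0 1 :=
    haveI := nhdsWithin_im_pos_neBot x
    tendsto_nhds_unique (hMp x) (tendsto_Mfun (hZp x) (hXp x) (by simp [hXpdet]))
  have hMm_eq (x : ℝ) : Mm x = Zm x * fromBlocks (Xm x)⁻¹ 0 0 1 :=
    haveI := nhdsWithin_im_neg_neBot x
    tendsto_nhds_unique (hMm x) (tendsto_Mfun (hZm x) (hXm x) (by simp [hXmdet]))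
  have hleft (x : ℝ) (i) (j : Fin 2) : Mp x i (Sum.inl j) = Mm x i (Sum.inl j) := by
    have h := submatrix_inl_mul_fromBlocks_inv_eq_of_jump
      ((hjump x).trans (by rw [JZmat_eq_fromBlocks])) (hXjump x) (by simp [det_fin_two])
    rw [← hMp_eq, ← hMm_eq] at h
    exact congrFun₂ h i j
  have hMdiff (z : ℂ) (hz : z.im ≠ 0) (i j) :
      DifferentiableAt ℂ (fun w => Mfun r Z X w i j) z :=
    differentiableAt_Mfun_apply (fun i j => (hZan z hz i j).differentiableAt)
      (fun i j => (hXan z hz i j).differentiableAt) (by simp [hXdet z hz]) i j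
  have hentry (M : Matrix (Fin 2 ⊕ Fin r) (Fin 2 ⊕ Fin r) ℂ) (i j) :=
    (continuous_id.matrix_elem i j).tendsto M
  choose F hF_diff hF_eq hF_real using fun i (j : Fin 2) =>
    exists_differentiable_eq_of_tendsto_im_pos_of_tendsto_im_neg (b := fun x => Mp x i (Sum.inl j))
      (fun z hz => hMdiff z hz i (Sum.inl j)) (fun x => (hentry _ i _).comp (hMp x))
      (fun x => hleft x i j ▸ (hentry _ i _).comp (hMm x))
  exact ⟨hleft, fun z => of fun i j => F i j z, hF_diff,
    fun z hz i j => hF_eq i j z hz, fun x i j => hF_real i j x⟩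

/-- The boundary values of the first two columns of `M` from above and below agree, and
these two columns (the blocks `M^{(11)}` and `M^{(21)}`) extend to an entire function. -/
theorem M_left_blocks_entire
    (n r : ℕ) (hr : 1 ≤ r) (hnr : r ≤ n)
    (V : ℝ → ℝ) (hV : Continuous V)
    (hVint : ∀ (c : ℝ) (k : ℕ), Integrable (fun x : ℝ => |x| ^ k * Real.exp (c * x - V x)))
    (p : ℕ → Polynomial ℝ)
    (hmonic : ∀ k, (p k).Monic)
    (hdeg : ∀ k, (p k).natDegree = k)
    (horth : ∀ k m, k ≠ m → ∫ x : ℝ, (p k).eval x * (p m).eval x * Real.exp (-V x) = 0)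
    (κ : ℕ → ℝ) (hκpos : ∀ k, 0 < κ k)
    (hκ : ∀ k, ∫ x : ℝ, ((p k).eval x) ^ 2 * Real.exp (-V x) = ((κ k) ^ 2)⁻¹)
    (a : Fin r → ℝ) (ha : StrictAnti a) (ha0 : ∀ j, a j ≠ 0)
    (X : ℂ → Matrix (Fin 2) (Fin 2) ℂ)
    (hXan : ∀ z : ℂ, z.im ≠ 0 → ∀ i j, AnalyticAt ℂ (fun w => X w i j) z)
    (hXcol1 : ∀ z : ℂ, z.im ≠ 0 → ∀ i, X z i 0 = xcol n p κ z i)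
    (hXcol2 : ∀ z : ℂ, z.im ≠ 0 → ∀ i, X z i 1 =
      (2 * Real.pi * Complex.I)⁻¹ *
        ∫ s : ℝ, xcol n p κ (s : ℂ) i * ((Real.exp (-V s) : ℝ) : ℂ) / ((s : ℂ) - z))
    (hXdet : ∀ z : ℂ, z.im ≠ 0 → (X z).det = 1)
    (Xp Xm : ℝ → Matrix (Fin 2) (Fin 2) ℂ)
    (hXp : ∀ x : ℝ, Tendsto X (nhdsWithin (x : ℂ) {z : ℂ | 0 < z.im}) (nhds (Xp x)))
    (hXm : ∀ x : ℝ, Tendsto X (nhdsWithin (x : ℂ) {z : ℂ | z.im < 0}) (nhds (Xm x)))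
    (hXpcont : Continuous Xp) (hXmcont : Continuous Xm)
    (hXjump : ∀ x : ℝ, Xp x = Xm x * !![1, Complex.exp ((-(V x) : ℝ) : ℂ); 0, 1])
    (hXpdet : ∀ x : ℝ, (Xp x).det = 1) (hXmdet : ∀ x : ℝ, (Xm x).det = 1)
    (Z : ℂ → Matrix (Fin 2 ⊕ Fin r) (Fin 2 ⊕ Fin r) ℂ)
    (hZan : ∀ z : ℂ, z.im ≠ 0 → ∀ i j, AnalyticAt ℂ (fun w => Z w i j) z)
    (hZunit : ∀ z : ℂ, z.im ≠ 0 → IsUnit (Z z))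
    (Zp Zm : ℝ → Matrix (Fin 2 ⊕ Fin r) (Fin 2 ⊕ Fin r) ℂ)
    (hZp : ∀ x : ℝ, Tendsto Z (nhdsWithin (x : ℂ) {z : ℂ | 0 < z.im}) (nhds (Zp x)))
    (hZm : ∀ x : ℝ, Tendsto Z (nhdsWithin (x : ℂ) {z : ℂ | z.im < 0}) (nhds (Zm x)))
    (hZpcont : Continuous Zp) (hZmcont : Continuous Zm)
    (hjump : ∀ x : ℝ, Zp x = Zm x * JZmat r V a x)
    (hasymp : ∀ i j, (fun z : ℂ => (Z z * DinvM n r z - 1) i j)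
        =O[Bornology.cobounded ℂ] fun z => ‖z‖⁻¹)
    (Mp Mm : ℝ → Matrix (Fin 2 ⊕ Fin r) (Fin 2 ⊕ Fin r) ℂ)
    (hMp : ∀ x : ℝ, Tendsto (Mfun r Z X) (nhdsWithin (x : ℂ) {z : ℂ | 0 < z.im}) (nhds (Mp x)))
    (hMm : ∀ x : ℝ, Tendsto (Mfun r Z X) (nhdsWithin (x : ℂ) {z : ℂ | z.im < 0}) (nhds (Mm x)))
 :
    (∀ x : ℝ, ∀ i, ∀ j : Fin 2, Mp x i (Sum.inl j) = Mm x i (Sum.inl j)) ∧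
    ∃ F : ℂ → Matrix (Fin 2 ⊕ Fin r) (Fin 2) ℂ,
      (∀ i j, Differentiable ℂ fun z => F z i j) ∧
      (∀ z : ℂ, z.im ≠ 0 → ∀ i j, F z i j = Mfun r Z X z i (Sum.inl j)) ∧
      (∀ x : ℝ, ∀ i j, F (x : ℂ) i j = Mp x i (Sum.inl j)) :=
  M_left_blocks_entire_general r V a X hXan hXdet Xp Xm hXp hXm hXjump hXpdet hXmdet Z hZan Zp Zm
    hZp hZm hjump Mp Mm hMp hMm

end
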